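/- Fix λ > 0 and a c.d.f. F^A supported on [A,∞) with ∫₀^∞ (1 − F^A(u)) du = M < ∞. Define for real s > 0, Φ(s) = 1 − (1/(λ+s)) (∫₀^∞ e^{−st − λ∫₀^t (1−F^A(u)) du} dt)^{−1}. Then lim_{s→0⁺} Φ(s) = 1, and lim_{s→0⁺} (1 − Φ(s))/s = (1/λ) e^{λM}; in particular, if Φ is the Laplace transform E[e^{−sτ}] of a nonnegative random variable τ, then E[τ] = (1/λ) e^{λM}. -/

import Mathlib

/-!
With `G t = ∫₀ᵗ (1 - F^A)`, which increases to `M`, the integral in `Φ` is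
`I s = ∫₀^∞ e^{-st} e^{-λ G t} dt`. Substituting `t = u / s` turns `s I s` into
`∫₀^∞ e^{-u} e^{-λ G (u/s)} du`, which tends to `e^{-λM}` by dominated convergence. Since
`1 - Φ s = s (λ + s)⁻¹ (s I s)⁻¹`, this gives both limits. For the mean,
`(1 - E e^{-sτ}) / s = E[(1 - e^{-sτ}) / s]`, whose integrand is dominated by `τ` and tends to `τ`.
-/

open MeasureTheory Set intervalIntegral

/-- Takács' expression for the Laplace transform of the renewal time at `0` of the
`M/G/∞` queue with arrival rate `λ` and service c.d.f. `FA`. -/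
noncomputable def takacsPhi (lam : ℝ) (FA : ℝ → ℝ) (s : ℝ) : ℝ :=
  1 - (1 / (lam + s)) *
    (∫ t in Set.Ioi (0:ℝ), Real.exp (-s * t - lam * ∫ u in (0:ℝ)..t, (1 - FA u)))⁻¹

open Filter Real Topology

theorem mul_integral_exp_neg_mul_Ioi_eq {s : ℝ} (hs : 0 < s) (h : ℝ → ℝ) :
    s * ∫ t in Ioi 0, exp (-s * t) * h t = ∫ u in Ioi 0, exp (-u) * h (u / s) := by
  have hsub := integral_comp_mul_left_Ioi (fun u => exp (-u) * h (u / s)) 0 hs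
  simp only [mul_zero, smul_eq_mul, mul_div_cancel_left₀ _ hs.ne'] at hsub
  simp only [neg_mul, hsub, mul_inv_cancel_left₀ hs.ne']

theorem tendsto_mul_integral_exp_neg_mul_Ioi {h : ℝ → ℝ} {C L : ℝ} (hh : Measurable h)
    (hbound : ∀ t, 0 < t → |h t| ≤ C) (hlim : Tendsto h atTop (𝓝 L)) :
    Tendsto (fun s => s * ∫ t in Ioi 0, exp (-s * t) * h t) (𝓝[>] 0) (𝓝 L) := by
  have hL : ∫ u in Ioi (0 : ℝ), exp (-u) * L = L := by
    rw [MeasureTheory.integral_mul_const, integral_exp_neg_Ioi_zero, one_mul]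
  have hexp : IntegrableOn (fun u : ℝ => exp (-u)) (Ioi 0) := by
    simpa using exp_neg_integrableOn_Ioi 0 one_pos
  refine Tendsto.congr' (eventually_nhdsWithin_of_forall fun s hs =>
    (mul_integral_exp_neg_mul_Ioi_eq hs h).symm) ?_
  rw [← hL]
  refine tendsto_integral_filter_of_dominated_convergence (fun u => exp (-u) * C)
    (Eventually.of_forall fun s => by fun_prop) ?_ (hexp.mul_const C) ?_
  · filter_upwards [self_mem_nhdsWithin] with s hs
    refine (ae_restrict_iff' measurableSet_Ioi).2 (ae_of_all _ fun u hu => ?_)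
    rw [norm_mul, Real.norm_of_nonneg (exp_pos _).le, Real.norm_eq_abs]
    exact mul_le_mul_of_nonneg_left (hbound _ (div_pos hu hs)) (exp_pos _).le
  · refine (ae_restrict_iff' measurableSet_Ioi).2 (ae_of_all _ fun u hu => ?_)
    have hdiv : Tendsto (fun s : ℝ => u / s) (𝓝[>] 0) atTop := by
      simpa only [div_eq_mul_inv] using tendsto_inv_nhdsGT_zero.const_mul_atTop hu
    exact (hlim.comp hdiv).const_mul _

theorem tendsto_mul_integral_exp_neg_mul_sub_primitive {f : ℝ → ℝ} {lam : ℝ} (hlam : 0 ≤ lam)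
    (hf : Antitone f) (hf_nonneg : ∀ u, 0 ≤ f u) (hf_int : IntegrableOn f (Ioi 0)) :
    Tendsto (fun s => s * ∫ t in Ioi 0, exp (-s * t - lam * ∫ u in (0 : ℝ)..t, f u))
      (𝓝[>] 0) (𝓝 (exp (-(lam * ∫ u in Ioi 0, f u)))) := by
  have hG_cont : Continuous fun t => ∫ u in (0 : ℝ)..t, f u :=
    continuous_primitive (fun _ _ => hf.intervalIntegrable) 0
  have hG_lim : Tendsto (fun t => ∫ u in (0 : ℝ)..t, f u) atTop (𝓝 (∫ u in Ioi 0, f u)) :=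
    intervalIntegral_tendsto_integral_Ioi 0 hf_int tendsto_id
  have hbound : ∀ t, 0 < t → |exp (-(lam * ∫ u in (0 : ℝ)..t, f u))| ≤ 1 := fun t ht => by
    rw [abs_of_pos (exp_pos _), exp_le_one_iff, neg_nonpos]
    exact mul_nonneg hlam (integral_nonneg ht.le fun u _ => hf_nonneg u)
  simp_rw [sub_eq_add_neg, exp_add]
  exact tendsto_mul_integral_exp_neg_mul_Ioi (by fun_prop) hbound
    ((continuous_exp.tendsto _).comp (hG_lim.const_mul lam).neg)

theorem tendsto_one_sub_exp_neg_mul_div (x : ℝ) :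
    Tendsto (fun s : ℝ => (1 - exp (-s * x)) / s) (𝓝[>] 0) (𝓝 x) := by
  have hderiv : HasDerivAt (fun s : ℝ => 1 - exp (-s * x)) x 0 := by
    simpa using (((hasDerivAt_id (0 : ℝ)).neg.mul_const x).exp).const_sub 1
  refine ((hasDerivAt_iff_tendsto_slope.1 hderiv).mono_left
    (nhdsWithin_mono 0 fun y hy => ne_of_gt hy)).congr fun s => ?_
  simp [slope_def_field]

theorem tendsto_one_sub_integral_exp_neg_mul_div {Ω : Type*} [MeasurableSpace Ω]
    {μ : Measure Ω} [IsProbabilityMeasure μ] {τ : Ω → ℝ} (hτ : Integrable τ μ)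
    (hτ_nonneg : 0 ≤ᵐ[μ] τ) :
    Tendsto (fun s => (1 - ∫ ω, exp (-s * τ ω) ∂μ) / s) (𝓝[>] 0) (𝓝 (∫ ω, τ ω ∂μ)) := by
  have hτ_meas : AEStronglyMeasurable τ μ := hτ.aestronglyMeasurable
  have hexp_int (s : ℝ) (hs : 0 < s) : Integrable (fun ω => exp (-s * τ ω)) μ := by
    refine (integrable_const (1 : ℝ)).mono' (by fun_prop) ?_
    filter_upwards [hτ_nonneg] with ω (hω : 0 ≤ τ ω)
    rw [Real.norm_of_nonneg (exp_pos _).le, exp_le_one_iff]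
    nlinarith
  have hslope : ∀ s, 0 < s → (1 - ∫ ω, exp (-s * τ ω) ∂μ) / s =
      ∫ ω, (1 - exp (-s * τ ω)) / s ∂μ := fun s hs => by
    rw [MeasureTheory.integral_div, integral_sub (integrable_const 1) (hexp_int s hs),
      MeasureTheory.integral_const, probReal_univ, one_smul]
  refine Tendsto.congr' (eventually_nhdsWithin_of_forall fun s hs => (hslope s hs).symm) ?_
  refine tendsto_integral_filter_of_dominated_convergence τ
    (Eventually.of_forall fun s => by fun_prop) ?_ hτ
    (ae_of_all _ fun ω => tendsto_one_sub_exp_neg_mul_div (τ ω))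
  filter_upwards [self_mem_nhdsWithin] with s (hs : 0 < s)
  filter_upwards [hτ_nonneg] with ω (hω : 0 ≤ τ ω)
  have hle : exp (-s * τ ω) ≤ 1 := exp_le_one_iff.2 (by nlinarith)
  have hge : 1 - s * τ ω ≤ exp (-s * τ ω) := by simpa using one_sub_le_exp_neg (s * τ ω)
  rw [Real.norm_of_nonneg (div_nonneg (by linarith) hs.le), div_le_iff₀ hs]
  linarith

theorem tendsto_one_of_tendsto_one_sub_div {φ : ℝ → ℝ} {b : ℝ}
    (h : Tendsto (fun s => (1 - φ s) / s) (𝓝[>] 0) (𝓝 b)) : Tendsto φ (𝓝[>] 0) (𝓝 1) := by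
  have hid : Tendsto (fun s : ℝ => s) (𝓝[>] 0) (𝓝 0) :=
    tendsto_nhdsWithin_of_tendsto_nhds tendsto_id
  have := tendsto_const_nhds (x := (1 : ℝ)).sub (hid.mul h)
  rw [zero_mul, sub_zero] at this
  refine this.congr' (eventually_nhdsWithin_of_forall fun s (hs : 0 < s) => ?_)
  rw [mul_div_cancel₀ _ hs.ne', sub_sub_cancel]

noncomputable def takacsIntegral (lam : ℝ) (FA : ℝ → ℝ) (s : ℝ) : ℝ :=
  ∫ t in Ioi (0 : ℝ), exp (-s * t - lam * ∫ u in (0 : ℝ)..t, (1 - FA u))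

theorem takacsPhi_eq (lam : ℝ) (FA : ℝ → ℝ) (s : ℝ) :
    takacsPhi lam FA s = 1 - 1 / (lam + s) * (takacsIntegral lam FA s)⁻¹ := rfl

theorem tendsto_one_sub_takacsPhi_div {lam a : ℝ} {FA : ℝ → ℝ} (hlam : lam ≠ 0) (ha : a ≠ 0)
    (hI : Tendsto (fun s => s * takacsIntegral lam FA s) (𝓝[>] 0) (𝓝 a)) :
    Tendsto (fun s => (1 - takacsPhi lam FA s) / s) (𝓝[>] 0) (𝓝 (lam⁻¹ * a⁻¹)) := by
  have hlam_add : Tendsto (fun s : ℝ => lam + s) (𝓝[>] 0) (𝓝 lam) := by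
    simpa using tendsto_const_nhds (x := lam) |>.add
      (tendsto_nhdsWithin_of_tendsto_nhds (tendsto_id (x := 𝓝 (0 : ℝ))))
  refine ((hlam_add.inv₀ hlam).mul (hI.inv₀ ha)).congr'
    (eventually_nhdsWithin_of_forall fun s (hs : 0 < s) => ?_)
  dsimp only
  rw [takacsPhi_eq, sub_sub_cancel, mul_inv, one_div]
  field_simp [hs.ne']

theorem takacs_renewal_mean_general
    (lam M : ℝ) (hlam : 0 < lam)
    (FA : ℝ → ℝ) (hmono : Monotone FA)
    (h01 : ∀ x, FA x ∈ Set.Icc (0:ℝ) 1)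
    (hMint : IntegrableOn (fun u => 1 - FA u) (Set.Ioi 0))
    (hM : ∫ u in Set.Ioi (0:ℝ), (1 - FA u) = M) :
    Filter.Tendsto (takacsPhi lam FA) (nhdsWithin 0 (Set.Ioi 0)) (nhds 1) ∧
    Filter.Tendsto (fun s => (1 - takacsPhi lam FA s) / s) (nhdsWithin 0 (Set.Ioi 0))
      (nhds ((1 / lam) * Real.exp (lam * M))) ∧
    ∀ {Ω : Type} [MeasurableSpace Ω] (μ : Measure Ω) [IsProbabilityMeasure μ]
      (τ : Ω → ℝ), Measurable τ → (∀ ω, 0 ≤ τ ω) → Integrable τ μ →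
      (∀ s : ℝ, 0 < s → takacsPhi lam FA s = ∫ ω, Real.exp (-s * τ ω) ∂μ) →
      ∫ ω, τ ω ∂μ = (1 / lam) * Real.exp (lam * M) := by
  have hI : Tendsto (fun s => s * takacsIntegral lam FA s) (𝓝[>] 0) (𝓝 (exp (-(lam * M)))) := by
    rw [← hM]
    exact tendsto_mul_integral_exp_neg_mul_sub_primitive hlam.le
      (fun _ _ h => sub_le_sub_left (hmono h) 1) (fun u => sub_nonneg.2 (h01 u).2) hMint
  have hslope := tendsto_one_sub_takacsPhi_div hlam.ne' (exp_pos _).ne' hI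
  rw [exp_neg, inv_inv, ← one_div] at hslope
  refine ⟨tendsto_one_of_tendsto_one_sub_div hslope, hslope, ?_⟩
  intro Ω _ μ _ τ _ hτ_nonneg hτ hΦ
  refine tendsto_nhds_unique ?_ hslope
  refine (tendsto_one_sub_integral_exp_neg_mul_div hτ (ae_of_all _ hτ_nonneg)).congr'
    (eventually_nhdsWithin_of_forall fun s hs => by dsimp only; rw [hΦ s hs])

/-- for a service c.d.f. `F^A` supported on `[A,∞)` with integrated tail
`M = ∫₀^∞ (1−F^A) < ∞`, the Takács formula `Φ` satisfies `Φ(s) → 1` and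
`(1−Φ(s))/s → (1/λ) e^{λM}` as `s → 0⁺`; in particular, if `Φ` is the Laplace transform
of a nonnegative random variable `τ`, then `E[τ] = (1/λ) e^{λM}`. -/
theorem takacs_renewal_mean
    (lam A M : ℝ) (hlam : 0 < lam) (hA : 0 ≤ A)
    (FA : ℝ → ℝ) (hmeas : Measurable FA) (hmono : Monotone FA)
    (h01 : ∀ x, FA x ∈ Set.Icc (0:ℝ) 1) (hsupp : ∀ x < A, FA x = 0)
    (hMint : IntegrableOn (fun u => 1 - FA u) (Set.Ioi 0))
    (hM : ∫ u in Set.Ioi (0:ℝ), (1 - FA u) = M) :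
    Filter.Tendsto (takacsPhi lam FA) (nhdsWithin 0 (Set.Ioi 0)) (nhds 1) ∧
    Filter.Tendsto (fun s => (1 - takacsPhi lam FA s) / s) (nhdsWithin 0 (Set.Ioi 0))
      (nhds ((1 / lam) * Real.exp (lam * M))) ∧
    ∀ {Ω : Type} [MeasurableSpace Ω] (μ : Measure Ω) [IsProbabilityMeasure μ]
      (τ : Ω → ℝ), Measurable τ → (∀ ω, 0 ≤ τ ω) → Integrable τ μ →
      (∀ s : ℝ, 0 < s → takacsPhi lam FA s = ∫ ω, Real.exp (-s * τ ω) ∂μ) →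
      ∫ ω, τ ω ∂μ = (1 / lam) * Real.exp (lam * M) :=
  takacs_renewal_mean_general lam M hlam FA hmono h01 hMint hM
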